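/- Every δ-reversible ring R is δ-linear Armendariz: if a₀, a₁, b₀, b₁ ∈ R and the polynomials f(x) = a₀ + a₁x and g(x) = b₀ + b₁x in R[x] satisfy f(x)g(x) = 0, then aᵢbⱼ ∈ δ(R) for all 0 ≤ i, j ≤ 1. -/

import Mathlib

/-!
Put `x = a₁b₀`; the coefficients of `fg = 0` give `a₀b₀ = 0` and `x = -a₀b₁`. For every `r`,
`x r x = a₁ (b₀ r a₀) (-b₁)`, and `b₀ (r a₀) ∈ δ(R)` by δ-reversibility since `(r a₀) b₀ = 0`;
as `δ(R)` is a two-sided ideal, `x R x ⊆ δ(R)`. A maximal right ideal `M` with `x R x ⊆ M`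
contains `x`: otherwise `1 = m + x c` with `m ∈ M`, and `x = m x + x c x ∈ M`. Hence `x ∈ δ(R)`,
and `a₀b₁ ∈ δ(R)` by the symmetric argument.

That `δ(R)` is closed under left multiplication by `a` holds because `{y | a y ∈ M}` is again an
essential right ideal and is either maximal or all of `R`.
-/

/-- A right ideal `I` of `R` (a submodule of `R` as a right `R`-module, i.e. an
`Rᵐᵒᵖ`-submodule) is essential if every right ideal meeting it trivially is trivial. -/
def IsEssentialRightIdeal (R : Type*) [Ring R] (I : Submodule Rᵐᵒᵖ R) : Prop :=
  ∀ K : Submodule Rᵐᵒᵖ R, K ⊓ I = ⊥ → K = ⊥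

/-- The Zhou radical `δ(R)`: the intersection of all essential maximal right ideals of `R`
(the whole ring if there are no essential maximal right ideals). -/
def zhouRadical (R : Type*) [Ring R] : Set R :=
  ⋂₀ { S : Set R | ∃ I : Submodule Rᵐᵒᵖ R, IsCoatom I ∧ IsEssentialRightIdeal R I ∧ S = ↑I }

/-- A ring `R` is `δ`-reversible if `a * b = 0` implies `b * a ∈ δ(R)`. -/
def IsDeltaReversible (R : Type*) [Ring R] : Prop :=
  ∀ a b : R, a * b = 0 → b * a ∈ zhouRadical R

lemma mem_zhouRadical_iff {R : Type*} [Ring R] {x : R} :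
    x ∈ zhouRadical R ↔
      ∀ I : Submodule Rᵐᵒᵖ R, IsCoatom I → IsEssentialRightIdeal R I → x ∈ I := by
  simp only [zhouRadical, Set.mem_sInter, Set.mem_ofPred_eq]
  exact ⟨fun h I hc he => h I ⟨I, hc, he, rfl⟩, by rintro h _ ⟨I, hc, he, rfl⟩; exact h I hc he⟩

lemma isEssentialRightIdeal_iff {R : Type*} [Ring R] {I : Submodule Rᵐᵒᵖ R} :
    IsEssentialRightIdeal R I ↔ ∀ y : R, y ≠ 0 → ∃ c : R, y * c ∈ I ∧ y * c ≠ 0 := by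
  constructor
  · intro he y hy
    have hspan : Submodule.span Rᵐᵒᵖ {y} ⊓ I ≠ ⊥ := fun hbot =>
      hy <| (Submodule.span_singleton_eq_bot (R := Rᵐᵒᵖ)).1 (he _ hbot)
    obtain ⟨z, ⟨hzy, hzI⟩, hz⟩ := (Submodule.ne_bot_iff _).1 hspan
    obtain ⟨c, rfl⟩ := Submodule.mem_span_singleton.1 hzy
    exact ⟨c.unop, hzI, hz⟩
  · intro h K hKI
    refine (Submodule.eq_bot_iff K).2 fun y hy => by_contra fun hy0 => ?_
    obtain ⟨c, hcI, hc0⟩ := h y hy0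
    have hmem : y * c ∈ K ⊓ I := ⟨K.smul_mem (MulOpposite.op c) hy, hcI⟩
    exact hc0 (by rwa [hKI, Submodule.mem_bot] at hmem)

section MaximalRightIdeal

variable {R : Type*} [Ring R] {I : Submodule Rᵐᵒᵖ R}

lemma IsCoatom.exists_add_mul_eq_one (hI : IsCoatom I) {y : R} (hy : y ∉ I) :
    ∃ m ∈ I, ∃ c : R, m + y * c = 1 := by
  have hsup : I ⊔ Submodule.span Rᵐᵒᵖ {y} = ⊤ := codisjoint_iff.1 <|
    hI.not_le_iff_codisjoint.1 fun hle => hy (hle (Submodule.mem_span_singleton_self y))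
  obtain ⟨m, hm, z, hz, hmz⟩ := Submodule.mem_sup.1 (hsup ▸ Submodule.mem_top (x := (1 : R)))
  obtain ⟨c, rfl⟩ := Submodule.mem_span_singleton.1 hz
  exact ⟨m, hm, c.unop, hmz⟩

lemma IsCoatom.mem_of_forall_mul_mul_mem (hI : IsCoatom I) {x : R}
    (h : ∀ r : R, x * r * x ∈ I) : x ∈ I := by
  by_contra hx
  obtain ⟨m, hm, c, hmc⟩ := hI.exists_add_mul_eq_one hx
  have hx_eq : x = m * x + x * c * x := by rw [← add_mul, hmc, one_mul]
  exact hx (hx_eq ▸ I.add_mem (I.smul_mem (MulOpposite.op x) hm) (h c))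

abbrev comapMulLeft (I : Submodule Rᵐᵒᵖ R) (a : R) : Submodule Rᵐᵒᵖ R :=
  I.comap (DistribSMul.toLinearMap Rᵐᵒᵖ R a)

lemma mem_comapMulLeft {a y : R} : y ∈ comapMulLeft I a ↔ a * y ∈ I := Iff.rfl

lemma IsCoatom.comapMulLeft (hI : IsCoatom I) (a : R) (hne : comapMulLeft I a ≠ ⊤) :
    IsCoatom (comapMulLeft I a) := by
  refine ⟨hne, fun J hJ => eq_top_iff.2 fun t _ => ?_⟩
  obtain ⟨j, hjJ, hjK⟩ := SetLike.exists_of_lt hJ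
  obtain ⟨m, hm, c, hmc⟩ := hI.exists_add_mul_eq_one (mt mem_comapMulLeft.2 hjK)
  -- `a * t = (m + a * j * c) * a * t`, so `t - j * (c * a * t) ∈ comapMulLeft I a ≤ J`
  have hdiff : t - j * (c * a * t) ∈ J := hJ.le <| mem_comapMulLeft.2 <| by
    have : a * (t - j * (c * a * t)) = m * (a * t) := calc
      a * (t - j * (c * a * t)) = a * t - a * j * c * (a * t) := by noncomm_ring
      _ = m * (a * t) := by rw [eq_sub_of_add_eq' hmc]; noncomm_ring
    exact this ▸ I.smul_mem (MulOpposite.op (a * t)) hm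
  simpa using J.add_mem hdiff (J.smul_mem (MulOpposite.op (c * a * t)) hjJ)

lemma IsEssentialRightIdeal.comapMulLeft (hI : IsEssentialRightIdeal R I) (a : R) :
    IsEssentialRightIdeal R (comapMulLeft I a) := by
  refine isEssentialRightIdeal_iff.2 fun y hy => ?_
  by_cases hay : a * y = 0
  · exact ⟨1, mem_comapMulLeft.2 (by simp [hay]), by simpa using hy⟩
  · obtain ⟨c, hcI, hc0⟩ := isEssentialRightIdeal_iff.1 hI (a * y) hay
    exact ⟨c, mem_comapMulLeft.2 (by rwa [← mul_assoc]),
      fun h => hc0 (by rw [mul_assoc, h, mul_zero])⟩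

end MaximalRightIdeal

section ZhouRadical

variable {R : Type*} [Ring R]

lemma zero_mem_zhouRadical : (0 : R) ∈ zhouRadical R :=
  mem_zhouRadical_iff.2 fun I _ _ => I.zero_mem

lemma mul_mem_zhouRadical_right {x : R} (hx : x ∈ zhouRadical R) (a : R) :
    x * a ∈ zhouRadical R :=
  mem_zhouRadical_iff.2 fun I hc he =>
    I.smul_mem (MulOpposite.op a) (mem_zhouRadical_iff.1 hx I hc he)

lemma mul_mem_zhouRadical_left {x : R} (hx : x ∈ zhouRadical R) (a : R) :
    a * x ∈ zhouRadical R := by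
  refine mem_zhouRadical_iff.2 fun I hc he => mem_comapMulLeft.1 ?_
  by_cases htop : comapMulLeft I a = ⊤
  · exact htop ▸ Submodule.mem_top
  · exact mem_zhouRadical_iff.1 hx _ (hc.comapMulLeft a htop) (he.comapMulLeft a)

lemma mem_zhouRadical_of_forall_mul_mul_mem {x : R}
    (h : ∀ r : R, x * r * x ∈ zhouRadical R) : x ∈ zhouRadical R :=
  mem_zhouRadical_iff.2 fun I hc he =>
    hc.mem_of_forall_mul_mul_mem fun r => mem_zhouRadical_iff.1 (h r) I hc he

lemma IsDeltaReversible.mul_mem_zhouRadical_of_add_eq_zero (hrev : IsDeltaReversible R)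
    {a₀ a₁ b₀ b₁ : R} (h₀ : a₀ * b₀ = 0) (h₁ : a₁ * b₀ + a₀ * b₁ = 0) :
    a₁ * b₀ ∈ zhouRadical R := by
  refine mem_zhouRadical_of_forall_mul_mul_mem fun r => ?_
  have hmid : b₀ * (r * a₀) ∈ zhouRadical R := hrev _ _ (by rw [mul_assoc, h₀, mul_zero])
  have heq : a₁ * b₀ * r * (a₁ * b₀) = a₁ * (b₀ * (r * a₀)) * -b₁ := calc
    a₁ * b₀ * r * (a₁ * b₀) = a₁ * b₀ * r * -(a₀ * b₁) := by rw [eq_neg_of_add_eq_zero_left h₁]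
    _ = a₁ * (b₀ * (r * a₀)) * -b₁ := by noncomm_ring
  exact heq ▸ mul_mem_zhouRadical_right (mul_mem_zhouRadical_left hmid a₁) (-b₁)

end ZhouRadical

open Polynomial in
lemma Polynomial.linear_mul_linear_eq_zero {R : Type*} [Ring R] {a₀ a₁ b₀ b₁ : R}
    (h : (C a₀ + C a₁ * X) * (C b₀ + C b₁ * X) = (0 : R[X])) :
    a₀ * b₀ = 0 ∧ a₁ * b₀ + a₀ * b₁ = 0 ∧ a₁ * b₁ = 0 := by
  have hcoeff (n : ℕ) := congrArg (coeff · n) h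
  simp only [mul_add, add_mul, mul_assoc, coeff_add, coeff_C_mul, ← C_mul] at hcoeff
  exact ⟨by simpa using hcoeff 0, by simpa [add_comm] using hcoeff 1,
    by simpa [coeff_X] using hcoeff 2⟩

open Polynomial in
/-- Every δ-reversible ring is δ-linear Armendariz. -/
theorem deltaLinearArmendariz_of_deltaReversible (R : Type*) [Ring R]
    (hrev : IsDeltaReversible R) (a₀ a₁ b₀ b₁ : R)
    (h : (C a₀ + C a₁ * X) * (C b₀ + C b₁ * X) = (0 : R[X])) :
    a₀ * b₀ ∈ zhouRadical R ∧ a₀ * b₁ ∈ zhouRadical R ∧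
      a₁ * b₀ ∈ zhouRadical R ∧ a₁ * b₁ ∈ zhouRadical R := by
  obtain ⟨h₀₀, hmid, h₁₁⟩ := linear_mul_linear_eq_zero h
  -- the situation is symmetric under swapping the indices 0 and 1
  have hmid' : a₀ * b₁ + a₁ * b₀ = 0 := by rw [add_comm, hmid]
  exact ⟨h₀₀ ▸ zero_mem_zhouRadical, hrev.mul_mem_zhouRadical_of_add_eq_zero h₁₁ hmid',
    hrev.mul_mem_zhouRadical_of_add_eq_zero h₀₀ hmid, h₁₁ ▸ zero_mem_zhouRadical⟩
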